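/- Let f : ℂ³ → ℂ be f(x,y,z) = x + x²y and let l(x,y,z) = ax + by + cz be a linear form with c ≠ 0. Then the polar set of f with respect to l is empty: there is no point p ∈ ℂ³ with ∇f(p) ≠ 0 at which ∇f(p) and (a,b,c) are linearly dependent. -/
import Mathlib

/-- For f(x,y,z) = x + x²y and a linear form l = ax + by + cz with c ≠ 0, the polar
set of f with respect to l is empty: there is no point where ∇f = (1+2xy, x², 0) is
nonzero and ∇f, (a,b,c) are linearly dependent. -/
theorem polar_set_empty (a b c : ℂ) (hc : c ≠ 0) :
    ¬ ∃ x y z : ℂ,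
      (¬ (1 + 2 * x * y = 0 ∧ x ^ 2 = 0)) ∧
      ∃ s t : ℂ, (¬ (s = 0 ∧ t = 0)) ∧
        s * (1 + 2 * x * y) + t * a = 0 ∧
        s * x ^ 2 + t * b = 0 ∧
        s * 0 + t * c = 0 := by
  rintro ⟨x, y, z, hgrad, s, t, hst, h1, h2, h3⟩
  have htc : t * c = 0 := by linear_combination h3
  have ht : t = 0 := (mul_eq_zero.mp htc).resolve_right hc
  subst ht
  have hs : s ≠ 0 := fun h => hst ⟨h, rfl⟩
  have e1 : s * (1 + 2 * x * y) = 0 := by linear_combination h1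
  have e2 : s * x ^ 2 = 0 := by linear_combination h2
  exact hgrad ⟨(mul_eq_zero.mp e1).resolve_left hs, (mul_eq_zero.mp e2).resolve_left hs⟩
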